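/- For every k ∈ ℕ, the one-dimensional Lebesgue measure of Y_k equals 2^{−k}·2^{m_k}, i.e. μ₁(Y_k) = 2^{m_k − k}. -/

import Mathlib

/-!
Since `rade ≤ 1`, the sum equals `k` only where every term is `1`, so up to the endpoint
`2 ^ m_k` the set `Y_k` is `D_k ∩ [0, 2 ^ m_k)`, where `D_k = lowerHalves m k` is the set
on which `r₀(t / 2 ^ m_j) = 1` for all `1 ≤ j ≤ k`. As the `m_j` increase, `D_k` is
`2 ^ m_k`-periodic, and `D_{k+1} ∩ [0, 2 ^ m_{k+1}) = D_k ∩ [0, 2 ^ (m_{k+1} - 1))` is made of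
`2 ^ (m_{k+1} - 1 - m_k)` translates of `D_k ∩ [0, 2 ^ m_k)`: each step halves the density.
-/

open MeasureTheory Set ENNReal

/-- The 1-periodic Rademacher function: `1` on `[0, 1/2)`, `-1` on `[1/2, 1)`,
extended 1-periodically to `ℝ`. -/
noncomputable def rade (t : ℝ) : ℝ := if Int.fract t < 1 / 2 then 1 else -1

/-- `Yset m k = {t ∈ [0, 2^{m_k}] : ∑_{j=1}^{k} r₀(t / 2^{m_j}) = k}`. -/
def Yset (m : ℕ → ℕ) (k : ℕ) : Set ℝ :=
  {t | t ∈ Icc (0 : ℝ) (2 ^ m k) ∧ ∑ j ∈ Finset.Icc 1 k, rade (t / 2 ^ m j) = (k : ℝ)}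

def lowerHalf (n : ℕ) : Set ℝ := {t | Int.fract (t / 2 ^ n) < 1 / 2}

def lowerHalves (m : ℕ → ℕ) (k : ℕ) : Set ℝ := ⋂ j ∈ Finset.Icc 1 k, lowerHalf (m j)

lemma rade_le_one (t : ℝ) : rade t ≤ 1 := by
  unfold rade; split_ifs <;> norm_num

lemma rade_eq_one_iff (t : ℝ) : rade t = 1 ↔ Int.fract t < 1 / 2 := by
  unfold rade; split_ifs with h <;> norm_num [h]

lemma sum_rade_eq_card_iff (s : Finset ℕ) (f : ℕ → ℝ) :
    ∑ j ∈ s, rade (f j) = s.card ↔ ∀ j ∈ s, Int.fract (f j) < 1 / 2 := by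
  simpa [rade_eq_one_iff] using
    Finset.sum_eq_sum_iff_of_le (s := s) (g := fun _ ↦ (1 : ℝ)) fun j _ ↦ rade_le_one (f j)

lemma Yset_eq_lowerHalves_inter (m : ℕ → ℕ) (k : ℕ) :
    Yset m k = lowerHalves m k ∩ Icc 0 (2 ^ m k) := by
  ext t
  have hsum := sum_rade_eq_card_iff (Finset.Icc 1 k) (fun j ↦ t / 2 ^ m j)
  rw [Nat.card_Icc, Nat.add_sub_cancel] at hsum
  simp only [Yset, lowerHalves, lowerHalf, mem_ofPred_eq, mem_inter_iff, mem_iInter, hsum]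
  tauto

lemma lowerHalves_zero (m : ℕ → ℕ) : lowerHalves m 0 = univ := by
  simp [lowerHalves]

lemma lowerHalves_succ (m : ℕ → ℕ) (k : ℕ) :
    lowerHalves m (k + 1) = lowerHalves m k ∩ lowerHalf (m (k + 1)) := by
  rw [lowerHalves, ← Finset.insert_Icc_right_eq_Icc_add_one (by omega),
    Finset.set_biInter_insert, inter_comm, lowerHalves]

lemma lowerHalf_inter_Ico (n : ℕ) :
    lowerHalf n ∩ Ico 0 (2 ^ n) = Ico 0 (2 ^ n / 2) := by
  have hpos : (0 : ℝ) < 2 ^ n := by positivity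
  ext t
  simp only [lowerHalf, mem_inter_iff, mem_ofPred_eq, mem_Ico]
  constructor
  · rintro ⟨hfract, h0, hlt⟩
    rw [Int.fract_eq_self.mpr ⟨by positivity, (div_lt_one hpos).mpr hlt⟩,
      div_lt_iff₀ hpos] at hfract
    exact ⟨h0, by linarith⟩
  · rintro ⟨h0, hlt⟩
    have hlt' : t < 2 ^ n := by linarith
    rw [Int.fract_eq_self.mpr ⟨by positivity, (div_lt_one hpos).mpr hlt'⟩, div_lt_iff₀ hpos]
    exact ⟨by linarith, h0, hlt'⟩

lemma preimage_add_two_pow_lowerHalf {n N : ℕ} (h : n ≤ N) :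
    (· + 2 ^ N) ⁻¹' lowerHalf n = lowerHalf n := by
  obtain ⟨d, rfl⟩ := Nat.exists_eq_add_of_le h
  have hshift (t : ℝ) : (t + 2 ^ (n + d)) / 2 ^ n = t / 2 ^ n + ((2 ^ d : ℕ) : ℝ) := by
    rw [add_div, pow_add, mul_div_cancel_left₀ _ (by positivity)]
    push_cast; rfl
  ext t
  simp only [lowerHalf, mem_preimage, mem_ofPred_eq, hshift, Int.fract_add_natCast]

lemma preimage_add_two_pow_lowerHalves {m : ℕ → ℕ} (hmono : ∀ j, 1 ≤ j → m j < m (j + 1))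
    (k : ℕ) : (· + 2 ^ m k) ⁻¹' lowerHalves m k = lowerHalves m k := by
  simp only [lowerHalves, preimage_iInter₂]
  refine iInter₂_congr fun j hj ↦ preimage_add_two_pow_lowerHalf ?_
  obtain ⟨h1j, hjk⟩ := Finset.mem_Icc.mp hj
  exact Nat.rel_of_forall_rel_succ_of_le_of_le (· ≤ ·) (fun i hi ↦ (hmono i hi).le) h1j hjk

lemma volume_inter_Ico_natCast_mul {S : Set ℝ} {P : ℝ} (hP : 0 ≤ P)
    (hS : (· + P) ⁻¹' S = S) (N : ℕ) :
    volume (S ∩ Ico 0 (N * P)) = N * volume (S ∩ Ico 0 P) := by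
  induction N with
  | zero => simp
  | succ N ih =>
    have hhead : S ∩ Ico 0 ((N + 1 : ℕ) * P) ∩ Ico 0 P = S ∩ Ico 0 P := by
      rw [inter_assoc, Ico_inter_Ico, sup_idem, min_eq_right (by push_cast; nlinarith)]
    have htail : (· + P) ⁻¹' ((S ∩ Ico 0 ((N + 1 : ℕ) * P)) \ Ico 0 P) = S ∩ Ico 0 (N * P) := by
      rw [preimage_sdiff, preimage_inter, hS, preimage_add_const_Ico, preimage_add_const_Ico]
      ext t
      simp only [mem_sdiff, mem_inter_iff, mem_Ico]
      push_cast
      constructor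
      · rintro ⟨⟨hs, h0, h⟩, h'⟩; exact ⟨hs, not_lt.mp fun ht ↦ h' ⟨h0, by linarith⟩, by linarith⟩
      · rintro ⟨hs, h0, h⟩; exact ⟨⟨hs, by linarith, by linarith⟩, fun _ ↦ by linarith⟩
    rw [← measure_inter_add_sdiff _ measurableSet_Ico, hhead,
      ← measure_preimage_add_right volume P ((S ∩ Ico 0 ((N + 1 : ℕ) * P)) \ Ico 0 P), htail, ih]
    push_cast
    ring

lemma volume_lowerHalves_inter_Ico {m : ℕ → ℕ} (hmono : ∀ j, 1 ≤ j → m j < m (j + 1)) (k : ℕ) :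
    volume (lowerHalves m k ∩ Ico 0 (2 ^ m k)) = 2 ^ m k / 2 ^ k := by
  induction k with
  | zero => simp [lowerHalves_zero, ENNReal.ofReal_pow]
  | succ k ih =>
    rw [lowerHalves_succ, inter_assoc, lowerHalf_inter_Ico]
    -- `m 0` is unconstrained, so the step from `k = 0` cannot use periodicity.
    rcases Nat.eq_zero_or_pos k with rfl | hk
    · simp [lowerHalves_zero, ENNReal.ofReal_div_of_pos, ENNReal.ofReal_pow]
    · obtain ⟨a, ha⟩ : ∃ a, m (k + 1) = a + m k + 1 := ⟨m (k + 1) - m k - 1, by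
        have := hmono k hk; omega⟩
      have hlen : (2 : ℝ) ^ m (k + 1) / 2 = ((2 ^ a : ℕ) : ℝ) * 2 ^ m k := by
        rw [ha]; push_cast; ring
      rw [hlen, volume_inter_Ico_natCast_mul (by positivity)
        (preimage_add_two_pow_lowerHalves hmono k), ih, ha]
      push_cast
      rw [← mul_div_assoc, ← pow_add, pow_succ _ (a + m k), pow_succ _ k,
        ENNReal.mul_div_mul_right _ _ two_ne_zero ofNat_ne_top]

/-- For a strictly increasing sequence of naturals `m_1 < m_2 < ⋯`, the set `Y_k` has
one-dimensional Lebesgue measure `2^{m_k - k} = 2^{-k}·2^{m_k}`. -/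
theorem statement5 (m : ℕ → ℕ) (hmono : ∀ j, 1 ≤ j → m j < m (j + 1)) (k : ℕ) :
    volume (Yset m k) = 2 ^ m k / 2 ^ k := by
  rw [Yset_eq_lowerHalves_inter, ← volume_lowerHalves_inter_Ico hmono k]
  exact measure_congr ((ae_eq_refl _).inter Ico_ae_eq_Icc.symm)
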